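/- arXiv:2112.12601 — 3 statements merged into one kernel-verified Lean document; each statement's English description precedes it below -/
import Mathlib

section
/- For any skew-symmetric 2N×2N matrix A and any 2N×2N matrix B over a commutative ring, Pf(B A Bᵀ) = det(B) · Pf(A). -/
/-!
If `β` is an alternating bilinear form on `M`, then `v ↦ Pf (β (v a) (v b))` is multilinear in
`v : Fin (2n) → M` and vanishes when two of the vectors coincide, so it is `det` times its value
on a basis. For `β x y = xᵀ A y`, alternating because `A` is skew-symmetric with zero diagonal,
and `v` the rows of `B`, this is `Pf (B A Bᵀ) = det B · Pf A`.

Permutations inducing the same perfect matching form a left coset of the centralizer of the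
involution `2i ↔ 2i + 1`; the Pfaffian picks one normal-form representative per coset, and for a
skew-symmetric matrix the signed term does not depend on that choice.
-/

open Finset Matrix

/-- The Pfaffian of a `2n × 2n` matrix, defined as the signed sum over perfect
matchings of `{0, …, 2n−1}`. -/
def pfaffian {R : Type*} [CommRing R] {n : ℕ}
    (A : Matrix (Fin (2 * n)) (Fin (2 * n)) R) : R :=
  ∑ σ ∈ Finset.univ.filter (fun σ : Equiv.Perm (Fin (2 * n)) =>
      (∀ i : Fin n, σ ⟨2 * i.1, by have := i.isLt; omega⟩ <
          σ ⟨2 * i.1 + 1, by have := i.isLt; omega⟩) ∧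
      (∀ i j : Fin n, i < j → σ ⟨2 * i.1, by have := i.isLt; omega⟩ <
          σ ⟨2 * j.1, by have := j.isLt; omega⟩)),
    (Equiv.Perm.sign σ : ℤ) •
      ∏ i : Fin n, A (σ ⟨2 * i.1, by have := i.isLt; omega⟩)
        (σ ⟨2 * i.1 + 1, by have := i.isLt; omega⟩)

open Equiv Equiv.Perm

lemma Matrix.isAlt_toLinearMap₂' {R ι : Type*} [CommRing R] [Fintype ι] [LinearOrder ι]
    {A : Matrix ι ι R} (hA : Aᵀ = -A) (hd : ∀ i, A i i = 0) :
    (toLinearMap₂' R A : (ι → R) →ₗ[R] (ι → R) →ₗ[R] R).IsAlt := by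
  -- `xᵀ A x = -xᵀ A x` does not give `xᵀ A x = 0` in characteristic 2; `A = U - Uᵀ` does.
  set U : Matrix ι ι R := of fun i j => if i < j then A i j else 0
  have hU : A = U - Uᵀ := by
    ext i j
    have hji : A j i = -A i j := by simpa using congrFun (congrFun hA i) j
    rcases lt_trichotomy i j with h | rfl | h
    · simp [U, h, h.not_gt]
    · simp [U, hd]
    · simp [U, h, h.not_gt, hji]
  intro x
  rw [toLinearMap₂'_apply', hU, sub_mulVec, dotProduct_sub, mulVec_transpose,
    dotProduct_comm x (x ᵥ* U), ← dotProduct_mulVec, sub_self]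

lemma Matrix.mul_mul_transpose_apply {R ι : Type*} [NonUnitalSemiring R] [Fintype ι]
    (A B : Matrix ι ι R) (a b : ι) : (B * A * Bᵀ) a b = B a ⬝ᵥ (A *ᵥ B b) := by
  simp only [mul_apply, transpose_apply, dotProduct, mulVec, sum_mul, mul_sum, mul_assoc]
  exact sum_comm

lemma Equiv.Perm.toLex_mul_lt {α : Type*} [LT α] {μ ρ : Perm α} {a : α}
    (hfix : ∀ b < a, ρ b = b) (hlt : μ (ρ a) < μ a) : toLex ⇑(μ * ρ) < toLex ⇑μ :=
  ⟨a, fun b hb => by simp [hfix b hb], hlt⟩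

namespace Pfaffian

variable {n : ℕ}

/-- Definitionally the indexing of `pfaffian`, so that `pfaffian_eq_sum_term` is `rfl`. -/
def pairEquiv : Fin n × Bool ≃ Fin (2 * n) where
  toFun p := ⟨2 * p.1 + p.2.toNat, by have := p.1.isLt; cases p.2 <;> simp; omega⟩
  invFun x := (⟨x / 2, by omega⟩, decide (x.1 % 2 = 1))
  left_inv := by rintro ⟨i, b⟩; cases b <;> ext <;> simp; omega
  right_inv x := by
    ext; by_cases h : x.1 % 2 = 1 <;> simp [h] <;> omega

lemma pairEquiv_val (i : Fin n) (b : Bool) : (pairEquiv (i, b)).1 = 2 * i + b.toNat := rfl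

lemma pairEquiv_lt_pairEquiv_false_iff {i j : Fin n} {b : Bool} :
    pairEquiv (i, b) < pairEquiv (j, false) ↔ i < j := by
  rw [Fin.lt_def, Fin.lt_def, pairEquiv_val, pairEquiv_val]
  cases b <;> simp; omega

def matchingPerms (n : ℕ) : Finset (Perm (Fin (2 * n))) :=
  univ.filter fun σ =>
    (∀ i, σ (pairEquiv (i, false)) < σ (pairEquiv (i, true))) ∧
    ∀ i j, i < j → σ (pairEquiv (i, false)) < σ (pairEquiv (j, false))

def term {R : Type*} [CommRing R] (G : Matrix (Fin (2 * n)) (Fin (2 * n)) R)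
    (σ : Perm (Fin (2 * n))) : R :=
  (sign σ : ℤ) • ∏ i, G (σ (pairEquiv (i, false))) (σ (pairEquiv (i, true)))

lemma pfaffian_eq_sum_term {R : Type*} [CommRing R] (G : Matrix (Fin (2 * n)) (Fin (2 * n)) R) :
    pfaffian G = ∑ σ ∈ matchingPerms n, term G σ := rfl

def pairPerm (q : Perm (Fin n)) (c : Fin n → Bool) : Perm (Fin (2 * n)) :=
  pairEquiv.permCongr
    (prodCongrLeft (fun _ => q) * prodCongrRight fun i => if c i then swap false true else 1)

@[simp] lemma pairPerm_apply (q : Perm (Fin n)) (c : Fin n → Bool) (i : Fin n) (b : Bool) :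
    pairPerm q c (pairEquiv (i, b)) = pairEquiv (q i, xor (c i) b) := by
  simp only [pairPerm, permCongr_apply, symm_apply_apply, Perm.mul_apply, prodCongrRight_apply,
    prodCongrLeft_apply]
  cases c i <;> cases b <;> simp

lemma sign_pairPerm (q : Perm (Fin n)) (c : Fin n → Bool) :
    sign (pairPerm q c) = ∏ i, if c i then -1 else 1 := by
  simp [pairPerm, sign_permCongr, sign_prodCongrLeft, sign_prodCongrRight, apply_ite sign]

lemma pairPerm_one_false : pairPerm (1 : Perm (Fin n)) (fun _ => false) = 1 := by
  ext x
  obtain ⟨⟨i, b⟩, rfl⟩ := pairEquiv.surjective x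
  simp

def pairFlip (n : ℕ) : Perm (Fin (2 * n)) := pairPerm 1 fun _ => true

@[simp] lemma pairFlip_apply (i : Fin n) (b : Bool) :
    pairFlip n (pairEquiv (i, b)) = pairEquiv (i, !b) := by
  simp [pairFlip]

def pairStabilizer (n : ℕ) : Subgroup (Perm (Fin (2 * n))) :=
  Subgroup.centralizer {pairFlip n}

lemma mem_pairStabilizer_iff {π : Perm (Fin (2 * n))} :
    π ∈ pairStabilizer n ↔ ∃ q c, π = pairPerm q c := by
  rw [pairStabilizer, Subgroup.mem_centralizer_singleton_iff]
  constructor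
  · intro hπ
    set f : Fin n → Fin n × Bool := fun i => pairEquiv.symm (π (pairEquiv (i, false)))
    have hf : ∀ i, π (pairEquiv (i, false)) = pairEquiv ((f i).1, (f i).2) := fun i =>
      (pairEquiv.apply_symm_apply _).symm
    have hπf : ∀ i b, π (pairEquiv (i, b)) = pairEquiv ((f i).1, xor (f i).2 b) := by
      rintro i (_ | _)
      · simp [hf]
      · have h := congrArg (· (pairEquiv (i, false))) hπ
        simp only [Perm.mul_apply, pairFlip_apply, hf] at h
        simpa using h
    have hinj : Function.Injective fun i => (f i).1 := by
      intro i j hij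
      have h := hπf j (xor (f j).2 (f i).2)
      rw [← Bool.xor_assoc, Bool.xor_self, Bool.false_xor, ← show (f i).1 = (f j).1 from hij,
        ← hf] at h
      exact (congrArg Prod.fst (pairEquiv.injective (π.injective h))).symm
    refine ⟨Equiv.ofBijective _ (Finite.injective_iff_bijective.mp hinj), fun i => (f i).2, ?_⟩
    ext x
    obtain ⟨⟨i, b⟩, rfl⟩ := pairEquiv.surjective x
    simp [hπf]
  · rintro ⟨q, c, rfl⟩
    ext x
    obtain ⟨⟨i, b⟩, rfl⟩ := pairEquiv.surjective x
    simp [pairFlip]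

lemma eq_pairFlip_of_swap_mem {a b : Fin (2 * n)} (hab : a ≠ b)
    (h : swap a b ∈ pairStabilizer n) : b = pairFlip n a := by
  rw [pairStabilizer, Subgroup.mem_centralizer_singleton_iff] at h
  by_contra hb
  have hfix : pairFlip n a ≠ a := by
    obtain ⟨⟨i, c⟩, rfl⟩ := pairEquiv.surjective a
    simp
  have := congrArg (· a) h
  simp only [Perm.mul_apply, swap_apply_left, swap_apply_of_ne_of_ne hfix (Ne.symm hb)] at this
  exact hab ((pairFlip n).injective this)

/-- Every left coset of `pairStabilizer n` meets `matchingPerms n`: its lexicographically least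
element lies there, since otherwise flipping a pair or exchanging two pairs makes it smaller. -/
lemma exists_mem_matchingPerms_inv_mul_mem (τ : Perm (Fin (2 * n))) :
    ∃ μ ∈ matchingPerms n, μ⁻¹ * τ ∈ pairStabilizer n := by
  classical
  obtain ⟨μ, hμ, hmin⟩ := (univ.filter fun μ => μ⁻¹ * τ ∈ pairStabilizer n).exists_min_image
    (fun μ => toLex ⇑μ) ⟨τ, by simp [one_mem]⟩
  have hμ' : μ⁻¹ * τ ∈ pairStabilizer n := (mem_filter.mp hμ).2
  have hmove : ∀ q c i, (∀ k < i, q k = k ∧ c k = false) →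
      μ (pairEquiv (i, false)) ≤ μ (pairPerm q c (pairEquiv (i, false))) := by
    intro q c i hfix
    refine not_lt.mp fun hlt => (hmin _ ?_).not_gt (toLex_mul_lt ?_ hlt)
    · simpa [mul_assoc] using mul_mem (inv_mem (mem_pairStabilizer_iff.2 ⟨q, c, rfl⟩)) hμ'
    · intro x hx
      obtain ⟨⟨k, b⟩, rfl⟩ := pairEquiv.surjective x
      obtain ⟨hq, hc⟩ := hfix k (pairEquiv_lt_pairEquiv_false_iff.mp hx)
      simp [hq, hc]
  refine ⟨μ, ?_, hμ'⟩
  simp only [matchingPerms, mem_filter, mem_univ, true_and]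
  constructor
  · intro i
    have h := hmove 1 (fun k => decide (k = i)) i fun k hk => ⟨rfl, by simpa using hk.ne⟩
    simp only [pairPerm_apply, decide_true, Bool.true_xor, Bool.not_false] at h
    exact h.lt_of_ne (μ.injective.ne (pairEquiv.injective.ne (by simp)))
  · intro i j hij
    have h := hmove (swap i j) (fun _ => false) i fun k hk =>
      ⟨swap_apply_of_ne_of_ne hk.ne (hk.trans hij).ne, rfl⟩
    simp only [pairPerm_apply, swap_apply_left, Bool.false_xor] at h
    exact h.lt_of_ne (μ.injective.ne (pairEquiv.injective.ne (by simp [hij.ne])))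

lemma eq_of_mem_matchingPerms_of_inv_mul_mem {μ μ' : Perm (Fin (2 * n))}
    (hμ : μ ∈ matchingPerms n) (hμ' : μ' ∈ matchingPerms n) (h : μ⁻¹ * μ' ∈ pairStabilizer n) :
    μ = μ' := by
  obtain ⟨q, c, hqc⟩ := mem_pairStabilizer_iff.1 h
  obtain rfl : μ' = μ * pairPerm q c := by rw [← hqc, mul_inv_cancel_left]
  simp only [matchingPerms, mem_filter, mem_univ, true_and] at hμ hμ'
  have hc : c = fun _ => false := by
    funext i
    by_contra hci
    simp only [Bool.not_eq_false] at hci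
    have := hμ'.1 i
    simp only [Perm.mul_apply, pairPerm_apply, hci, Bool.true_xor, Bool.not_false,
      Bool.not_true] at this
    exact (hμ.1 (q i)).asymm this
  subst hc
  have hq : StrictMono q := fun i j hij => by
    have hf : StrictMono fun k => μ (pairEquiv (k, false)) := fun i j => hμ.2 i j
    simpa [hf.lt_iff_lt] using hμ'.2 i j hij
  rw [show q = 1 from Equiv.ext (congrFun hq.eq_id), pairPerm_one_false, mul_one]

section Terms

variable {R : Type*} [CommRing R] {G : Matrix (Fin (2 * n)) (Fin (2 * n)) R}

lemma term_mul_of_mem_pairStabilizer (hG : ∀ a b, G b a = -G a b) (μ : Perm (Fin (2 * n)))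
    {π : Perm (Fin (2 * n))} (hπ : π ∈ pairStabilizer n) : term G (μ * π) = term G μ := by
  obtain ⟨q, c, rfl⟩ := mem_pairStabilizer_iff.1 hπ
  set ε : Fin n → R := fun i => if c i then -1 else 1
  set g : Fin n → R := fun k => G (μ (pairEquiv (k, false))) (μ (pairEquiv (k, true)))
  have hfactor : ∀ i, G (μ (pairPerm q c (pairEquiv (i, false))))
      (μ (pairPerm q c (pairEquiv (i, true)))) = ε i * g (q i) := by
    intro i
    simp only [ε, g, pairPerm_apply]
    cases c i
    · simp
    · simp only [Bool.true_xor, Bool.not_false, Bool.not_true, if_true]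
      rw [hG]; simp
  have hsign : ((sign (pairPerm q c) : ℤ) : R) = ∏ i, ε i := by
    rw [sign_pairPerm]; push_cast; simp only [ε]; congr; ext; split_ifs <;> simp
  have hsq : (∏ i, ε i) * ∏ i, ε i = 1 := by
    rw [← prod_mul_distrib]
    exact prod_eq_one fun i _ => by simp only [ε]; split_ifs <;> simp
  unfold term
  simp only [zsmul_eq_mul, Perm.mul_apply, hfactor, prod_mul_distrib, Perm.sign_mul,
    Units.val_mul, Int.cast_mul, hsign, Equiv.prod_comp q g]
  linear_combination (((sign μ : ℤ) : R) * ∏ i, g i) * hsq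

lemma term_swap_mul {x y : Fin (2 * n)} (hxy : x ≠ y)
    (hswap : ∀ a b, G (swap x y a) (swap x y b) = G a b) (σ : Perm (Fin (2 * n))) :
    term G (swap x y * σ) = -term G σ := by
  simp [term, Perm.mul_apply, hswap, sign_swap hxy]

end Terms

variable {R M : Type*} [CommRing R] [AddCommMonoid M] [Module R M]

lemma prod_update_pairEquiv [DecidableEq (Fin (2 * n))] (β : M →ₗ[R] M →ₗ[R] R)
    (v : Fin (2 * n) → M) (k : Fin n) (c : Bool) (z : M) :
    ∏ i, β (Function.update v (pairEquiv (k, c)) z (pairEquiv (i, false)))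
        (Function.update v (pairEquiv (k, c)) z (pairEquiv (i, true))) =
      β (Function.update v (pairEquiv (k, c)) z (pairEquiv (k, false)))
        (Function.update v (pairEquiv (k, c)) z (pairEquiv (k, true))) *
      ∏ i ∈ {k}ᶜ, β (v (pairEquiv (i, false))) (v (pairEquiv (i, true))) := by
  rw [Fintype.prod_eq_mul_prod_compl k]
  congr 1
  refine prod_congr rfl fun i hi => ?_
  have hik : i ≠ k := by simpa using hi
  rw [Function.update_of_ne (pairEquiv.injective.ne (by simp [hik])),
    Function.update_of_ne (pairEquiv.injective.ne (by simp [hik]))]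

def pairProd (β : M →ₗ[R] M →ₗ[R] R) : MultilinearMap R (fun _ : Fin (2 * n) => M) R where
  toFun v := ∏ i, β (v (pairEquiv (i, false))) (v (pairEquiv (i, true)))
  map_update_add' v x a b := by
    obtain ⟨⟨k, c⟩, rfl⟩ := pairEquiv.surjective x
    simp only [prod_update_pairEquiv]
    cases c <;> simp [add_mul]
  map_update_smul' v x r a := by
    obtain ⟨⟨k, c⟩, rfl⟩ := pairEquiv.surjective x
    simp only [prod_update_pairEquiv]
    cases c <;> simp [mul_assoc]

end Pfaffian

open Pfaffian

/-- Exchanging `x` and `y` in the matching, followed by normalisation, is a sign-reversing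
involution on the terms of `pfaffian G`; its fixed points are the matchings pairing `x` with `y`,
whose terms contain the factor `G x y = 0`. -/
theorem pfaffian_eq_zero_of_swap {R : Type*} [CommRing R] {n : ℕ}
    {G : Matrix (Fin (2 * n)) (Fin (2 * n)) R} (hG : ∀ a b, G b a = -G a b) {x y : Fin (2 * n)}
    (hxy : x ≠ y) (hswap : ∀ a b, G (swap x y a) (swap x y b) = G a b) (hGxy : G x y = 0) :
    pfaffian G = 0 := by
  rw [pfaffian_eq_sum_term]
  choose ν hνM hνH using fun σ => exists_mem_matchingPerms_inv_mul_mem (swap x y * σ)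
  have hterm : ∀ σ, term G (ν σ) = -term G σ := fun σ => by
    rw [← term_mul_of_mem_pairStabilizer hG (ν σ) (hνH σ), mul_inv_cancel_left,
      term_swap_mul hxy hswap]
  refine sum_involution (fun σ _ => ν σ) (fun σ _ => by rw [hterm, add_neg_cancel])
    (fun σ _ hne hfix => hne ?_) (fun σ _ => hνM σ) (fun σ hσ => ?_)
  · have hmem := hνH σ
    rw [hfix, ← mul_assoc, show σ⁻¹ * swap x y * σ = swap (σ⁻¹ x) (σ⁻¹ y) by
      rw [swap_apply_apply, inv_inv]] at hmem
    have hpair := eq_pairFlip_of_swap_mem (σ⁻¹.injective.ne hxy) hmem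
    obtain ⟨⟨k, b⟩, hk⟩ := pairEquiv.surjective (σ⁻¹ x)
    rw [← hk, pairFlip_apply, Perm.inv_eq_iff_eq] at hpair
    rw [eq_comm, Perm.inv_eq_iff_eq] at hk
    refine smul_eq_zero_of_right _ (prod_eq_zero (mem_univ k) ?_)
    cases b <;> simp only [Bool.not_false, Bool.not_true] at hpair
    · rw [← hk, ← hpair, hGxy]
    · rw [← hk, ← hpair, hG, hGxy, neg_zero]
  · refine eq_of_mem_matchingPerms_of_inv_mul_mem (hνM _) hσ ?_
    simpa [mul_assoc] using mul_mem (hνH (ν σ)) (hνH σ)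

section Gram

variable {R M : Type*} [CommRing R] [AddCommMonoid M] [Module R M] {n : ℕ}

def pfaffianMultilinear (β : M →ₗ[R] M →ₗ[R] R) :
    MultilinearMap R (fun _ : Fin (2 * n) => M) R :=
  ∑ σ ∈ matchingPerms n, (sign σ : ℤ) • (pairProd β).domDomCongr σ

lemma pfaffianMultilinear_apply (β : M →ₗ[R] M →ₗ[R] R) (v : Fin (2 * n) → M) :
    pfaffianMultilinear β v = pfaffian (of fun a b => β (v a) (v b)) := by
  simp [pfaffianMultilinear, pfaffian_eq_sum_term, term, pairProd]

def pfaffianAlternating (β : M →ₗ[R] M →ₗ[R] R) (hβ : β.IsAlt) : M [⋀^Fin (2 * n)]→ₗ[R] R :=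
  { pfaffianMultilinear β with
    map_eq_zero_of_eq' := fun v x y hv hxy => by
      rw [MultilinearMap.toFun_eq_coe, pfaffianMultilinear_apply]
      refine pfaffian_eq_zero_of_swap (fun a b => (hβ.neg _ _).symm) hxy (fun a b => ?_) ?_
      · have : ∀ a, v (swap x y a) = v a := fun a => by
          rcases eq_or_ne a x with rfl | hax
          · simp [hv]
          rcases eq_or_ne a y with rfl | hay
          · simp [hv]
          · rw [swap_apply_of_ne_of_ne hax hay]
        simp [this]
      · simp [hv, hβ.self_eq_zero] }

end Gram

theorem pfaffian_gram_eq_det_mul {R M : Type*} [CommRing R] [AddCommGroup M] [Module R M] {n : ℕ}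
    (β : M →ₗ[R] M →ₗ[R] R) (hβ : β.IsAlt)
    (e : Module.Basis (Fin (2 * n)) R M) (v : Fin (2 * n) → M) :
    pfaffian (of fun a b => β (v a) (v b)) = e.det v * pfaffian (of fun a b => β (e a) (e b)) := by
  have := congrArg (· v) ((pfaffianAlternating β hβ).eq_smul_basis_det e)
  simpa [pfaffianAlternating, pfaffianMultilinear_apply, mul_comm] using this

/-- For skew-symmetric `A` and arbitrary `B` of order `2N` over a commutative
ring, `Pf (B A Bᵀ) = det B · Pf A`. -/
theorem pfaffian_conj {R : Type*} [CommRing R] (N : ℕ)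
    (A B : Matrix (Fin (2 * N)) (Fin (2 * N)) R)
    (hA : Aᵀ = -A) (hd : ∀ i, A i i = 0) :
    pfaffian (B * A * Bᵀ) = B.det * pfaffian A := by
  set β : (Fin (2 * N) → R) →ₗ[R] (Fin (2 * N) → R) →ₗ[R] R := toLinearMap₂' R A
  have hgram : B * A * Bᵀ = of fun a b => β (B a) (B b) := by
    ext a b
    rw [mul_mul_transpose_apply, of_apply, toLinearMap₂'_apply']
  have hbasis : A = of fun a b => β (Pi.basisFun R _ a) (Pi.basisFun R _ b) := by
    ext a b
    simp [β, toLinearMap₂'_apply']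
  have hdet : (Pi.basisFun R _).det B = B.det := Pi.basisFun_det_apply B
  have h := pfaffian_gram_eq_det_mul β (isAlt_toLinearMap₂' hA hd) (Pi.basisFun R _) B
  rwa [hdet, ← hbasis, ← hgram] at h
end

section
/- The Hermite–Padé approximation conditions reduce to a finite linear system: the condition P̂_k(z) + P_k(z)W(−z) + Q_k(z)Z(−z) = O(1/z^{k+1}) with P_k, P̂_k determined by Q_k is equivalent to ∬ y^{j+1} Q_k(x)/(x(x+y)) dμ(x)dμ(y) = ∫ x^j dμ(x) for j = 0, 1, …, k−1. -/
/-!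
For `z` beyond every node `x p`, the combination `P̂(z) + P(z) W(−z) + Q(z) Z(−z)` collapses,
term by term in the double sum, to a sum of simple fractions `∑ q, c q / (z + x q)` with
`c q = ∑ p, a p a q x q Q(x p) / (x p (x p + x q)) − a q`. Expanding `1 / (z + x q)` in powers
of `1 / z`, such a sum is `O(z^{-(k+1)})` exactly when its first `k` moments `∑ q, c q x q ^ j`
vanish, and these moment equations are the linear system.
-/

open Finset Polynomial Filter Asymptotics Topology

section SumDivAdd

variable {ι : Type*} [Fintype ι] (c x : ι → ℝ)

lemma eventually_forall_add_pos : ∀ᶠ z in atTop, ∀ q, 0 < z + x q :=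
  eventually_all.2 fun q => (eventually_gt_atTop (-x q)).mono fun z hz => by linarith

lemma tendsto_sum_div_add_atTop :
    Tendsto (fun z => ∑ q, c q / (z + x q)) atTop (𝓝 0) := by
  simpa using tendsto_finsetSum univ fun q _ =>
    tendsto_const_nhds.div_atTop (tendsto_atTop_add_const_right _ (x q) tendsto_id)

lemma mul_sum_div_add {z : ℝ} (hz : ∀ q, 0 < z + x q) :
    z * ∑ q, c q / (z + x q) = ∑ q, c q - ∑ q, c q * x q / (z + x q) := by
  rw [mul_sum, ← sum_sub_distrib]
  refine sum_congr rfl fun q _ => ?_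
  have := (hz q).ne'
  field_simp
  ring

lemma pow_mul_sum_div_add {n : ℕ} (hM : ∀ i < n, ∑ q, c q * x q ^ i = 0) {z : ℝ}
    (hz : ∀ q, 0 < z + x q) :
    z ^ n * ∑ q, c q / (z + x q) = (-1) ^ n * ∑ q, c q * x q ^ n / (z + x q) := by
  induction n with
  | zero => simp
  | succ n ih =>
    have hMn := hM n n.lt_succ_self
    calc z ^ (n + 1) * ∑ q, c q / (z + x q)
        = z * (z ^ n * ∑ q, c q / (z + x q)) := by ring
      _ = (-1) ^ n * (z * ∑ q, c q * x q ^ n / (z + x q)) := by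
        rw [ih fun i hi => hM i (hi.trans n.lt_succ_self)]; ring
      _ = (-1) ^ (n + 1) * ∑ q, c q * x q ^ (n + 1) / (z + x q) := by
        rw [mul_sum_div_add _ x hz, hMn]
        simp only [pow_succ, mul_assoc]
        ring

lemma tendsto_pow_succ_mul_sum_div_add {n : ℕ} (hM : ∀ i < n, ∑ q, c q * x q ^ i = 0) :
    Tendsto (fun z => z ^ (n + 1) * ∑ q, c q / (z + x q)) atTop
      (𝓝 ((-1) ^ n * ∑ q, c q * x q ^ n)) := by
  have hlim := (tendsto_sum_div_add_atTop (fun q => c q * x q ^ n * x q) x).const_sub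
    (∑ q, c q * x q ^ n) |>.const_mul ((-1 : ℝ) ^ n)
  rw [sub_zero] at hlim
  refine hlim.congr' ?_
  filter_upwards [eventually_forall_add_pos x] with z hz
  rw [pow_succ, mul_comm _ z, mul_assoc, pow_mul_sum_div_add c x hM hz, mul_left_comm,
    mul_sum_div_add _ x hz]

theorem isBigO_sum_div_add_iff_moments_eq_zero (k : ℕ) :
    (fun z => ∑ q, c q / (z + x q)) =O[atTop] (fun z => (z ^ (k + 1))⁻¹) ↔
      ∀ j < k, ∑ q, c q * x q ^ j = 0 := by
  constructor
  · intro h j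
    induction j using Nat.strong_induction_on with
    | _ j ih =>
      intro hjk
      have hM : ∀ i < j, ∑ q, c q * x q ^ i = 0 := fun i hi => ih i hi (hi.trans hjk)
      have hzero : Tendsto (fun z => z ^ (j + 1) * ∑ q, c q / (z + x q)) atTop (𝓝 0) := by
        refine ((isBigO_refl (fun z : ℝ => z ^ (j + 1)) atTop).mul h).trans_tendsto ?_
        refine (tendsto_inv_atTop_zero.comp (tendsto_pow_atTop (n := k - j) (by omega))).congr' ?_
        filter_upwards [eventually_gt_atTop 0] with z hz
        rw [Function.comp_apply, show k + 1 = j + 1 + (k - j) by omega, pow_add z (j + 1)]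
        field_simp
      simpa using tendsto_nhds_unique (tendsto_pow_succ_mul_sum_div_add c x hM) hzero
  · intro hM
    refine isBigO_of_div_tendsto_nhds ?_ _
      ((tendsto_pow_succ_mul_sum_div_add c x hM).congr fun z => ?_)
    · filter_upwards [eventually_gt_atTop 0] with z hz hzero
      exact absurd hzero (by positivity)
    · simp [div_eq_mul_inv, mul_comm]

end SumDivAdd

section HermitePade

variable {ι : Type*} (f : ℝ → ℝ) (a x : ι → ℝ)

lemma hermitePade_remainder_term_eq {z : ℝ} {p q : ι} (hxp : 0 < x p) (hxq : 0 < x q)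
    (hz : x p < z) :
    a p * a q * ((f z - f (x p)) / ((z - x p) * (x p + x q)))
      + a p * ((f z - f (x p)) / (z - x p)) * (a q / (-z - x q))
      - a p * f (x p) / x p * (a q / (-z - x q))
      + f z * (a q * a p / ((-z - x q) * (x q + x p)))
    = a p * a q * x q * f (x p) / (x p * (x p + x q)) / (z + x q) := by
  have : z - x p ≠ 0 := sub_ne_zero.2 hz.ne'
  have : -z - x q ≠ 0 := by linarith
  have : z + x q ≠ 0 := by linarith
  have : x p + x q ≠ 0 := by positivity
  have : x q + x p ≠ 0 := by positivity
  field_simp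
  ring

lemma hermitePade_remainder_eq_sum_div_add [Fintype ι] (hx : ∀ p, 0 < x p) {z : ℝ}
    (hz : ∀ p, x p < z) :
    (∑ p, ∑ q, a p * a q * ((f z - f (x p)) / ((z - x p) * (x p + x q)))) +
        ((∑ p, a p * ((f z - f (x p)) / (z - x p))) - (∑ p, a p * f (x p) / x p) + 1) *
          (∑ p, a p / (-z - x p)) +
        f z * (∑ p, ∑ q, a p * a q / ((-z - x p) * (x p + x q))) =
      ∑ q, (∑ p, a p * a q * x q * f (x p) / (x p * (x p + x q)) - a q) / (z + x q) := by
  have hswap : f z * (∑ p, ∑ q, a p * a q / ((-z - x p) * (x p + x q))) =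
      ∑ p, ∑ q, f z * (a q * a p / ((-z - x q) * (x q + x p))) := by
    simp only [mul_sum]
    exact sum_comm
  have hlast : ∑ q, a q / (-z - x q) = -∑ q, a q / (z + x q) := by
    rw [← sum_neg_distrib]
    exact sum_congr rfl fun q _ => by rw [← div_neg, neg_add']
  calc _ = (∑ p, ∑ q, (a p * a q * ((f z - f (x p)) / ((z - x p) * (x p + x q)))
            + a p * ((f z - f (x p)) / (z - x p)) * (a q / (-z - x q))
            - a p * f (x p) / x p * (a q / (-z - x q))
            + f z * (a q * a p / ((-z - x q) * (x q + x p))))) - ∑ q, a q / (z + x q) := by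
        rw [hswap, add_mul, sub_mul, one_mul, sum_mul_sum, sum_mul_sum, hlast]
        simp only [sum_add_distrib, sum_sub_distrib]
        ring
    _ = _ := by
        rw [sum_congr rfl fun p _ => sum_congr rfl fun q _ =>
          hermitePade_remainder_term_eq f a x (hx p) (hx q) (hz p), sum_comm]
        simp only [sub_div, sum_sub_distrib, sum_div]

end HermitePade

theorem HP_third_condition_iff_linear_system_general
    (K k : ℕ)
    (x a : Fin K → ℝ) (hxp : ∀ p, 0 < x p)
    (Q : Polynomial ℝ)
    (P Ph : ℝ → ℝ)
    (hP : ∀ z, P z =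
      (∑ p, a p * ((Q.eval z - Q.eval (x p)) / (z - x p))) -
        (∑ p, a p * Q.eval (x p) / x p) + 1)
    (hPh : ∀ z, Ph z =
      ∑ p, ∑ q, a p * a q *
        ((Q.eval z - Q.eval (x p)) / ((z - x p) * (x p + x q)))) :
    ((fun z : ℝ => Ph z + P z * (∑ p, a p / (-z - x p)) +
        Q.eval z * (∑ p, ∑ q, a p * a q / ((-z - x p) * (x p + x q))))
      =O[atTop] (fun z : ℝ => (z ^ (k + 1))⁻¹)) ↔
    (∀ j : Fin k,
      ∑ p, ∑ q, a p * a q * x q ^ ((j : ℕ) + 1) * Q.eval (x p) /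
          (x p * (x p + x q)) =
        ∑ p, a p * x p ^ (j : ℕ)) := by
  set c : Fin K → ℝ := fun q =>
    ∑ p, a p * a q * x q * Q.eval (x p) / (x p * (x p + x q)) - a q
  have hremainder : (fun z : ℝ => Ph z + P z * (∑ p, a p / (-z - x p)) +
      Q.eval z * (∑ p, ∑ q, a p * a q / ((-z - x p) * (x p + x q))))
        =ᶠ[atTop] fun z => ∑ q, c q / (z + x q) := by
    filter_upwards [eventually_all.2 fun p => eventually_gt_atTop (x p)] with z hz
    rw [hP, hPh]
    exact hermitePade_remainder_eq_sum_div_add (fun t => Q.eval t) a x hxp hz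
  have hmoment (j : ℕ) : ∑ q, c q * x q ^ j =
      (∑ p, ∑ q, a p * a q * x q ^ (j + 1) * Q.eval (x p) / (x p * (x p + x q))) -
        ∑ p, a p * x p ^ j := by
    simp only [c, sub_mul, sum_sub_distrib, sum_mul]
    rw [sum_comm]
    congr 1
    refine sum_congr rfl fun p _ => sum_congr rfl fun q _ => ?_
    ring
  rw [isBigO_congr hremainder EventuallyEq.rfl, isBigO_sum_div_add_iff_moments_eq_zero]
  simp only [hmoment, sub_eq_zero, Fin.forall_iff]

/-- The third Hermite–Padé approximation condition
`P̂(z) + P(z) W(−z) + Q(z) Z(−z) = O(1/z^{k+1})`, with `P, P̂` determined by `Q`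
via the divided-difference formulas, is equivalent to the finite linear system
`∬ y^{j+1} Q(x)/(x(x+y)) dμ(x)dμ(y) = ∫ x^j dμ(x)` for `j = 0, …, k−1`. -/
theorem HP_third_condition_iff_linear_system
    (K k : ℕ) (hk : 1 ≤ k) (hK : k < K)
    (x a : Fin K → ℝ) (hx : StrictMono x) (hxp : ∀ p, 0 < x p)
    (ha : ∀ p, 0 < a p)
    (Q : Polynomial ℝ) (hQ0 : Q.eval 0 = 0) (hQd : Q.natDegree = k)
    (P Ph : ℝ → ℝ)
    (hP : ∀ z, P z =
      (∑ p, a p * ((Q.eval z - Q.eval (x p)) / (z - x p))) -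
        (∑ p, a p * Q.eval (x p) / x p) + 1)
    (hPh : ∀ z, Ph z =
      ∑ p, ∑ q, a p * a q *
        ((Q.eval z - Q.eval (x p)) / ((z - x p) * (x p + x q)))) :
    ((fun z : ℝ => Ph z + P z * (∑ p, a p / (-z - x p)) +
        Q.eval z * (∑ p, ∑ q, a p * a q / ((-z - x p) * (x p + x q))))
      =O[atTop] (fun z : ℝ => (z ^ (k + 1))⁻¹)) ↔
    (∀ j : Fin k,
      ∑ p, ∑ q, a p * a q * x q ^ ((j : ℕ) + 1) * Q.eval (x p) /
          (x p * (x p + x q)) =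
        ∑ p, a p * x p ^ (j : ℕ)) :=
  HP_third_condition_iff_linear_system_general K k x a hxp Q P Ph hP hPh
end

section
/- For the Novikov peakon transition matrix S_k(z) = [[1−z m_k², −2z m_k e^{−x_k}, −z² m_k² e^{−2x_k}], [m_k e^{x_k}, 1, z m_k e^{−x_k}], [m_k² e^{2x_k}, 2 m_k e^{x_k}, 1 + z m_k²]], one has det S_k(z) = 1, K⁻¹ S_k(z)ᵀ K = S_k(−z), and S_k(z)⁻¹ = J S_k(z) J, where K = [[0,0,1],[0,2,0],[1,0,0]] and J = diag(1,−1,1). -/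
/-!
`S_k(z)` is the exponential `1 + N + N²/2` of a nilpotent matrix `N` (`N³ = 0`). Hence
`det S_k(z) = 1`, since `S_k(z) - 1` is nilpotent; `S_k(z)⁻¹ = exp (-N) = J S_k(z) J`, since
conjugation by `J` negates `N`; and `K⁻¹ S_k(z)ᵀ K = exp (K⁻¹ Nᵀ K)`, where `K⁻¹ Nᵀ K` is `N` at `-z`.
-/

open Matrix

/-- The Novikov peakon transition matrix `S_k(z)`. -/
noncomputable def Snov (m x z : ℝ) : Matrix (Fin 3) (Fin 3) ℝ :=
  !![1 - z * m ^ 2, -2 * z * m * Real.exp (-x), -z ^ 2 * m ^ 2 * Real.exp (-2 * x);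
     m * Real.exp x, 1, z * m * Real.exp (-x);
     m ^ 2 * Real.exp (2 * x), 2 * m * Real.exp x, 1 + z * m ^ 2]

/-- `K = [[0,0,1],[0,2,0],[1,0,0]]`. -/
def Kmat : Matrix (Fin 3) (Fin 3) ℝ := !![0, 0, 1; 0, 2, 0; 1, 0, 0]

/-- `J = diag(1,−1,1)`. -/
def Jmat : Matrix (Fin 3) (Fin 3) ℝ := !![1, 0, 0; 0, -1, 0; 0, 0, 1]

open Polynomial in
theorem Matrix.det_one_add_of_isNilpotent {n R : Type*} [Fintype n] [DecidableEq n] [CommRing R]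
    [IsReduced R] {M : Matrix n n R} (hM : IsNilpotent M) : (1 + M).det = 1 := by
  -- `charpolyRev (-M) = det (1 + X • M)` is a unit, hence constant over a reduced ring.
  have hdeg : (-M).charpolyRev.natDegree = 0 := by
    by_contra h
    exact not_isUnit_of_natDegree_pos_of_isReduced _ (Nat.pos_of_ne_zero h)
      (isUnit_charpolyRev_of_isNilpotent hM.neg)
  have hconst : (-M).charpolyRev.eval 1 = (-M).charpolyRev.eval 0 := by
    rw [eq_C_of_natDegree_eq_zero hdeg, eval_C, eval_C]
  rw [eval_charpolyRev, charpolyRev, ← coe_evalRingHom, RingHom.map_det] at hconst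
  rw [← hconst]
  congr 1
  ext i j
  by_cases h : i = j <;> simp [h]

namespace IsNilpotent

theorem exp_conj {A : Type*} [Ring A] [Module ℚ A] {P Q a : A} (hPQ : P * Q = 1)
    (hQP : Q * P = 1) (ha : IsNilpotent a) : exp (P * a * Q) = P * exp a * Q :=
  exp_smul (ConjAct.toConjAct (⟨P, Q, hPQ, hQP⟩ : Aˣ)) ha

variable {n R : Type*} [Fintype n] [DecidableEq n] [CommRing R] [Module ℚ R] {M : Matrix n n R}

theorem det_exp [IsReduced R] (hM : IsNilpotent M) : (exp M).det = 1 := by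
  simpa using Matrix.det_one_add_of_isNilpotent (isNilpotent_exp_sub_one hM)

theorem exp_transpose (hM : IsNilpotent M) : exp Mᵀ = (exp M)ᵀ := by
  obtain ⟨k, hk⟩ := hM
  have hkT : Mᵀ ^ k = 0 := by rw [← transpose_pow, hk, transpose_zero]
  simp [exp_eq_sum hk, exp_eq_sum hkT, transpose_sum, transpose_pow]

end IsNilpotent

/-- `Nnov m x z = D (m • N₀) D⁻¹` with `D = diag (e^{-x}, 1, e^x)` and
`N₀ = !![0, -2z, 0; 1, 0, z; 0, 2, 0]`. -/
noncomputable def Nnov (m x z : ℝ) : Matrix (Fin 3) (Fin 3) ℝ :=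
  !![0, -2 * z * m * Real.exp (-x), 0;
     m * Real.exp x, 0, z * m * Real.exp (-x);
     0, 2 * m * Real.exp x, 0]

section
variable (m x z : ℝ)

lemma Nnov_pow_three : Nnov m x z ^ 3 = 0 := by
  rw [pow_three]
  ext i j
  fin_cases i <;> fin_cases j <;> simp [Nnov, mul_apply, Fin.sum_univ_three, -mul_eq_zero] <;> ring

lemma isNilpotent_Nnov : IsNilpotent (Nnov m x z) := ⟨3, Nnov_pow_three m x z⟩

lemma Snov_eq_exp : Snov m x z = IsNilpotent.exp (Nnov m x z) := by
  have h2x : Real.exp (2 * x) = Real.exp x ^ 2 := by rw [← Real.exp_nat_mul]; ring_nf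
  have hx := Real.exp_ne_zero x
  rw [IsNilpotent.exp_eq_sum (Nnov_pow_three m x z)]
  ext i j
  fin_cases i <;> fin_cases j <;>
    simp [Snov, Nnov, Finset.sum_range_succ, sq, Rat.smul_def, Real.exp_neg, h2x] <;>
    field_simp <;> ring

lemma Nnov_transpose_mul_Kmat : (Nnov m x z)ᵀ * Kmat = Kmat * Nnov m x (-z) := by
  ext i j
  fin_cases i <;> fin_cases j <;> simp [Nnov, Kmat, mul_apply, Fin.sum_univ_three] <;> ring

lemma Jmat_mul_Nnov_mul_Jmat : Jmat * Nnov m x z * Jmat = -Nnov m x z := by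
  ext i j
  fin_cases i <;> fin_cases j <;> simp [Nnov, Jmat, mul_apply, Fin.sum_univ_three]

end

lemma det_Kmat : Kmat.det = -2 := by
  simp [Kmat, det_fin_three]

lemma Jmat_mul_Jmat : Jmat * Jmat = 1 := by
  ext i j
  fin_cases i <;> fin_cases j <;> simp [Jmat, mul_apply, Fin.sum_univ_three]

theorem Snov_symmetries_general (m x z : ℝ) :
    (Snov m x z).det = 1 ∧
    Kmat⁻¹ * (Snov m x z)ᵀ * Kmat = Snov m x (-z) ∧
    (Snov m x z)⁻¹ = Jmat * Snov m x z * Jmat := by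
  have hN := isNilpotent_Nnov m x z
  have hK : IsUnit Kmat.det := by rw [det_Kmat]; norm_num
  refine ⟨?_, ?_, ?_⟩
  · rw [Snov_eq_exp, IsNilpotent.det_exp hN]
  · rw [Snov_eq_exp, Snov_eq_exp, ← hN.exp_transpose,
      ← IsNilpotent.exp_conj (nonsing_inv_mul _ hK) (mul_nonsing_inv _ hK)
        (isNilpotent_transpose_iff.mpr hN),
      mul_assoc, Nnov_transpose_mul_Kmat, ← mul_assoc, nonsing_inv_mul _ hK, one_mul]
  · rw [Snov_eq_exp, ← IsNilpotent.exp_conj Jmat_mul_Jmat Jmat_mul_Jmat hN,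
      Jmat_mul_Nnov_mul_Jmat]
    exact inv_eq_left_inv (IsNilpotent.exp_neg_mul_exp_self hN)

/-- Symmetry properties of the Novikov peakon transition matrix:
`det S_k(z) = 1`, `K⁻¹ S_k(z)ᵀ K = S_k(−z)`, and `S_k(z)⁻¹ = J S_k(z) J`. -/
theorem Snov_symmetries (m x z : ℝ) (hm : 0 < m) :
    (Snov m x z).det = 1 ∧
    Kmat⁻¹ * (Snov m x z)ᵀ * Kmat = Snov m x (-z) ∧
    (Snov m x z)⁻¹ = Jmat * Snov m x z * Jmat :=
  Snov_symmetries_general m x z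
end
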